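/- arXiv:1708.05847 — 3 statements merged into one kernel-verified Lean document; each statement's English description precedes it below -/
import Mathlib

section
/- Let N be an N-layer (open or closed) Π³-net, fix 1≤i≤N, and let p∈P_i^* (so possibly p=p_ext when the net is open and i=N; in that case b_p denotes the bag of p_ext in the underlying closed net). If a marking m satisfies m·P_{i−1} ≥ pot(p) and m∈Live_j for every 1≤j≤i−1, then there exists m'∈R_{≤i−1}(m) such that m'(q)≥b_p(q) for every q∈P_{i−1}. -/
open Finset

section PetriBasics

variable {P T : Type} [Fintype P] [Fintype T]

/-- Transition `t` is enabled at marking `m`. -/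
def Enabled (Wm : P → T → ℕ) (m : P → ℕ) (t : T) : Prop :=
  ∀ p, Wm p t ≤ m p

/-- The marking obtained by firing transition `t` at marking `m`. -/
def Fire (Wm Wp : P → T → ℕ) (m : P → ℕ) (t : T) : P → ℕ :=
  fun p => m p - Wm p t + Wp p t

/-- One firing step. -/
def Step (Wm Wp : P → T → ℕ) (m m' : P → ℕ) : Prop :=
  ∃ t, Enabled Wm m t ∧ m' = Fire Wm Wp m t

/-- Reachability. -/
def Reach (Wm Wp : P → T → ℕ) : (P → ℕ) → (P → ℕ) → Prop :=
  Relation.ReflTransGen (Step Wm Wp)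

/-- One firing step using a transition from the set `S`. -/
def StepIn (Wm Wp : P → T → ℕ) (S : T → Prop) (m m' : P → ℕ) : Prop :=
  ∃ t, S t ∧ Enabled Wm m t ∧ m' = Fire Wm Wp m t

/-- Reachability using only transitions from the set `S`. -/
def ReachIn (Wm Wp : P → T → ℕ) (S : T → Prop) : (P → ℕ) → (P → ℕ) → Prop :=
  Relation.ReflTransGen (StepIn Wm Wp S)

/-- The marked net `(N, m0)` is live. -/
def LiveMarked (Wm Wp : P → T → ℕ) (m0 : P → ℕ) : Prop :=
  ∀ (t : T) (m : P → ℕ), Reach Wm Wp m0 m →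
    ∃ m', Reach Wm Wp m m' ∧ Enabled Wm m' t

/-- `b` is a bag of the net. -/
def IsBag (Wm Wp : P → T → ℕ) (b : P → ℕ) : Prop :=
  ∃ t, b = (fun p => Wm p t) ∨ b = (fun p => Wp p t)

/-- Edges of the bag graph. -/
def BagEdge (Wm Wp : P → T → ℕ) (b b' : P → ℕ) : Prop :=
  ∃ t, b = (fun p => Wm p t) ∧ b' = (fun p => Wp p t)

/-- Every connected component of the bag graph is strongly connected. -/
def WeaklyReversible (Wm Wp : P → T → ℕ) : Prop :=
  ∀ b b' : P → ℕ,
    Relation.ReflTransGen (fun x y => BagEdge Wm Wp x y ∨ BagEdge Wm Wp y x) b b' →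
    Relation.ReflTransGen (BagEdge Wm Wp) b b'

/-- `w · W(t)`, where `W = W⁺ − W⁻` is the incidence matrix. -/
def IncDot (Wm Wp : P → T → ℕ) (w : P → ℚ) (t : T) : ℚ :=
  ∑ p, w p * ((Wp p t : ℚ) - (Wm p t : ℚ))

/-- `w` is a witness of the bag `b`. -/
def IsWitness (Wm Wp : P → T → ℕ) (b : P → ℕ) (w : P → ℚ) : Prop :=
  ∀ t, (b = (fun p => Wm p t) → IncDot Wm Wp w t = -1) ∧
       (b = (fun p => Wp p t) → IncDot Wm Wp w t = 1) ∧
       (b ≠ (fun p => Wm p t) → b ≠ (fun p => Wp p t) → IncDot Wm Wp w t = 0)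

/-- `N` is a Π²-net. -/
def IsPi2 (Wm Wp : P → T → ℕ) : Prop :=
  WeaklyReversible Wm Wp ∧ ∀ b, IsBag Wm Wp b → ∃ w, IsWitness Wm Wp b w

/-- The potential of a place: `‖b_p‖ − 1`. -/
def potOf (bag : P → P → ℕ) (p : P) : ℕ := (∑ q, bag p q) - 1

/-- Minimum of `f` over `S`, with default value `d` when `S` is empty. -/
def minPotD {α : Type} (S : Finset α) (f : α → ℕ) (d : ℕ) : ℕ :=
  if h : S.Nonempty then S.inf' h f else d

end PetriBasics

/-- An `Nn`-layer closed Π³-net. -/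
structure ClosedPi3 (P T : Type) [Fintype P] [Fintype T] (Nn : ℕ) where
  Wm : P → T → ℕ
  Wp : P → T → ℕ
  no_useless : ∀ t, (fun p => Wm p t) ≠ (fun p => Wp p t)
  no_dup : ∀ t t' : T, (fun p => Wm p t) = (fun p => Wm p t') →
      (fun p => Wp p t) = (fun p => Wp p t') → t = t'
  /-- the bag associated with each place -/
  bag : P → P → ℕ
  /-- the layer of each place -/
  layer : P → ℕ
  bag_isBag : ∀ p, IsBag Wm Wp (bag p)
  bag_surj : ∀ b, IsBag Wm Wp b → ∃ p, bag p = b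
  bag_inj : Function.Injective bag
  bag_self : ∀ p, bag p p = 1
  layer_pos : ∀ p, 1 ≤ layer p
  layer_le : ∀ p, layer p ≤ Nn
  layer_surj : ∀ i, 1 ≤ i → i ≤ Nn → ∃ p, layer p = i
  edge_layer : ∀ p q : P, BagEdge Wm Wp (bag p) (bag q) → layer p = layer q
  layer_conn : ∀ p q : P, layer p = layer q →
      Relation.ReflTransGen (BagEdge Wm Wp) (bag p) (bag q)
  resource : ∀ p q : P, q ≠ p → 0 < bag p q →
      layer q + 1 = layer p ∧ ∀ r, layer r = layer q → potOf bag r ≤ potOf bag q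

namespace ClosedPi3

variable {P T : Type} [Fintype P] [Fintype T] {Nn : ℕ} (C : ClosedPi3 P T Nn)

def pot (p : P) : ℕ := potOf C.bag p

/-- `P_i`: the places of layer `i`. -/
def places (i : ℕ) : Finset P := Finset.univ.filter (fun p => C.layer p = i)

/-- `POT_i`: the maximal potential in layer `i`. -/
def POT (i : ℕ) : ℕ := (C.places i).sup C.pot

/-- `P_i^max`: the places of maximal potential in layer `i`. -/
def placesMax (i : ℕ) : Finset P := (C.places i).filter (fun p => C.pot p = C.POT i)

/-- `cin(p) = POT_i − pot(p)` for `p ∈ P_i`. -/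
def cin (p : P) : ℤ := (C.POT (C.layer p) : ℤ) - (C.pot p : ℤ)

/-- The invariant vector `v^(i)` (for `i = Nn` this is `v^(N)`). -/
def vvec (i : ℕ) : P → ℤ :=
  if i = Nn then (fun p => if C.layer p = Nn then 1 else 0)
  else fun p => (if C.layer p = i then 1 else 0) + (if C.layer p = i + 1 then C.cin p else 0)

/-- `m · v^(i)`. -/
def vdot (i : ℕ) (m : P → ℕ) : ℤ := ∑ p, C.vvec i p * (m p : ℤ)

/-- `m ∈ Inv_i(m0)`. -/
def InvSet (m0 : P → ℕ) (i : ℕ) (m : P → ℕ) : Prop := C.vdot i m = C.vdot i m0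

/-- `m ∈ Live_i`. -/
def LiveSet (i : ℕ) (m : P → ℕ) : Prop :=
  if i = Nn then 0 < ∑ p ∈ C.places Nn, m p
  else minPotD ((C.places (i + 1)).filter (fun p => 0 < m p)) C.pot (C.POT (i + 1))
        ≤ ∑ p ∈ C.places i, m p

/-- `t` belongs to `⋃ {T_i | S i}`: the input bag of `t` lies in a layer satisfying `S`. -/
def transIn (S : ℕ → Prop) (t : T) : Prop :=
  ∃ p, S (C.layer p) ∧ C.bag p = (fun q => C.Wm q t)

/-- The marking `m` is `i`-live. -/
def iLive (i : ℕ) (m : P → ℕ) : Prop :=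
  ∀ t, C.transIn (· ≤ i) t →
    ∃ m', ReachIn C.Wm C.Wp (C.transIn (· ≤ i)) m m' ∧ Enabled C.Wm m' t

end ClosedPi3

/-- An `Nn`-layer open Π³-net over places `P`: it is obtained from an `Nn`-layer
closed Π³-net over `Option P` by deleting the place `none` (a.k.a. `p_ext`),
which lies in layer `Nn`. -/
structure OpenPi3 (P T : Type) [Fintype P] [Fintype T] (Nn : ℕ) where
  closed : ClosedPi3 (Option P) T Nn
  pext_layer : closed.layer none = Nn

namespace OpenPi3

variable {P T : Type} [Fintype P] [Fintype T] {Nn : ℕ} (O : OpenPi3 P T Nn)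

/-- Backward incidence matrix of the open net. -/
def Wm : P → T → ℕ := fun p t => O.closed.Wm (some p) t

/-- Forward incidence matrix of the open net. -/
def Wp : P → T → ℕ := fun p t => O.closed.Wp (some p) t

def layer (p : P) : ℕ := O.closed.layer (some p)

def pot (p : P) : ℕ := O.closed.pot (some p)

/-- `pot(p_ext)`. -/
def potExt : ℕ := O.closed.pot none

/-- `P_i`: the (remaining) places of layer `i`. -/
def places (i : ℕ) : Finset P := Finset.univ.filter (fun p => O.layer p = i)

/-- `POT_i`, with `POT_N = pot(p_ext)` for open nets. -/
def POT (i : ℕ) : ℕ := if i = Nn then O.potExt else (O.places i).sup O.pot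

def placesMax (i : ℕ) : Finset P := (O.places i).filter (fun p => O.pot p = O.POT i)

def cin (p : P) : ℤ := (O.POT (O.layer p) : ℤ) - (O.pot p : ℤ)

/-- The invariant vector `v^(i)` (used for `1 ≤ i ≤ Nn − 1`). -/
def vvec (i : ℕ) : P → ℤ :=
  fun p => (if O.layer p = i then 1 else 0) + (if O.layer p = i + 1 then O.cin p else 0)

def vdot (i : ℕ) (m : P → ℕ) : ℤ := ∑ p, O.vvec i p * (m p : ℤ)

def InvSet (m0 : P → ℕ) (i : ℕ) (m : P → ℕ) : Prop :=
  if i = Nn then True else O.vdot i m = O.vdot i m0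

/-- `m ∈ Live_i` for the open net: for `i = N − 1` the virtual place `p_ext`
always counts as marked. -/
def LiveSet (i : ℕ) (m : P → ℕ) : Prop :=
  if i = Nn then True
  else if i + 1 = Nn then
    min O.potExt
        (minPotD ((O.places Nn).filter (fun p => 0 < m p)) O.pot O.potExt)
      ≤ ∑ p ∈ O.places i, m p
  else
    minPotD ((O.places (i + 1)).filter (fun p => 0 < m p)) O.pot (O.POT (i + 1))
      ≤ ∑ p ∈ O.places i, m p

def transIn (S : ℕ → Prop) (t : T) : Prop := O.closed.transIn S t

def iLive (i : ℕ) (m : P → ℕ) : Prop :=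
  ∀ t, O.transIn (· ≤ i) t →
    ∃ m', ReachIn O.Wm O.Wp (O.transIn (· ≤ i)) m m' ∧ Enabled O.Wm m' t

end OpenPi3

/-!
Induction on the layer. To gather the resources of a place `p` of layer `k + 2` on layer `k + 1`,
repeatedly move a token from a place with surplus to a place with deficit along the strongly
connected bag graph of layer `k + 1`. Each transition on the way is enabled by first gathering its
own resources on layer `k` (the induction hypothesis); this only trades the resources on layer `k`
of the current place for those of the next one, and firing never destroys any `Live_j`. The token
that starts moving is taken from a marked place of minimal potential in layer `k + 1` (a place in
the bag of `p` has maximal potential, so one with surplus can be chosen), and then `Live_k`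
provides its resources. An open net is the closed one run with `p_ext` unmarked.
-/

section Generic

variable {P T : Type}

theorem minPotD_le_iff {α : Type} {S : Finset α} {f : α → ℕ} {d x : ℕ}
    (hd : ∀ u ∈ S, f u ≤ d) : minPotD S f d ≤ x ↔ d ≤ x ∨ ∃ u ∈ S, f u ≤ x := by
  unfold minPotD
  split_ifs with hS
  · rw [Finset.inf'_le_iff]
    refine ⟨Or.inr, fun h => h.elim (fun hdx => ?_) id⟩
    obtain ⟨u, hu⟩ := hS
    exact ⟨u, hu, (hd u hu).trans hdx⟩
  · simp [Finset.not_nonempty_iff_eq_empty.1 hS]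

theorem minPotD_map {α β : Type} (S : Finset α) (e : α ↪ β) (f : β → ℕ) (d : ℕ) :
    minPotD (S.map e) f d = minPotD S (f ∘ e) d := by
  unfold minPotD
  by_cases hS : S.Nonempty
  · rw [dif_pos (Finset.map_nonempty.2 hS), dif_pos hS, Finset.inf'_map]
  · rw [dif_neg (by rwa [Finset.map_nonempty]), dif_neg hS]

theorem exists_lt_of_sum_le_of_lt {ι : Type} {A : Finset ι} {b m : ι → ℕ} {r : ι}
    (hsum : ∑ q ∈ A, b q ≤ ∑ q ∈ A, m q) (hr : r ∈ A) (hmr : m r < b r) :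
    ∃ q ∈ A, b q < m q := by
  by_contra! h
  exact (Finset.sum_lt_sum h ⟨r, hr, hmr⟩).not_ge hsum

theorem sum_tsub_lt_of_move {ι : Type} [DecidableEq ι] {A : Finset ι} {b m m' : ι → ℕ}
    {s r : ι} (hr : r ∈ A) (hsr : s ≠ r) (hs : b s < m s) (hmr : m r < b r)
    (hmove : ∀ u ∈ A, m' u + (if u = s then 1 else 0) = m u + (if u = r then 1 else 0)) :
    ∑ q ∈ A, (b q - m' q) < ∑ q ∈ A, (b q - m q) := by
  refine Finset.sum_lt_sum (fun u hu => ?_) ⟨r, hr, ?_⟩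
  · have h := hmove u hu
    by_cases hus : u = s
    · subst hus
      rw [if_pos rfl, if_neg hsr] at h
      omega
    · split_ifs at h <;> omega
  · have h := hmove r hr
    rw [if_pos rfl, if_neg hsr.symm] at h
    omega

theorem fire_add_Wm {Wm Wp : P → T → ℕ} {m : P → ℕ} {t : T} (hen : Enabled Wm m t) (q : P) :
    Fire Wm Wp m t q + Wm q t = m q + Wp q t := by
  have := hen q
  simp only [Fire]
  omega

variable {Wm Wp : P → T → ℕ} {S : T → Prop} {m m' : P → ℕ}

theorem ReachIn.mono {S' : T → Prop} (h : ∀ t, S t → S' t) (hr : ReachIn Wm Wp S m m') :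
    ReachIn Wm Wp S' m m' := by
  induction hr with
  | refl => exact .refl
  | tail _ hstep ih =>
    obtain ⟨t, ht, hen, he⟩ := hstep
    exact ih.tail ⟨t, h t ht, hen, he⟩

theorem ReachIn.preserve {Q : (P → ℕ) → Prop}
    (hQ : ∀ m t, S t → Enabled Wm m t → Q m → Q (Fire Wm Wp m t))
    (hr : ReachIn Wm Wp S m m') (hm : Q m) : Q m' := by
  induction hr with
  | refl => exact hm
  | tail _ hstep ih =>
    obtain ⟨t, ht, hen, rfl⟩ := hstep
    exact hQ _ t ht hen ih

theorem ReachIn.comp {Q : Type} (f : Q → P) (hr : ReachIn Wm Wp S m m') :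
    ReachIn (fun q t => Wm (f q) t) (fun q t => Wp (f q) t) S (m ∘ f) (m' ∘ f) := by
  induction hr with
  | refl => exact .refl
  | tail _ hstep ih =>
    obtain ⟨t, ht, hen, rfl⟩ := hstep
    exact ih.tail ⟨t, ht, fun q => hen (f q), rfl⟩

end Generic

namespace ClosedPi3

variable {P T : Type} [Fintype P] [Fintype T] {Nn : ℕ} (C : ClosedPi3 P T Nn)

theorem mem_places {k : ℕ} {q : P} : q ∈ C.places k ↔ C.layer q = k := by
  simp [places]

theorem places_zero : C.places 0 = ∅ :=
  Finset.eq_empty_of_forall_notMem fun q hq => by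
    have := C.layer_pos q
    rw [C.mem_places.1 hq] at this
    omega

theorem bag_eq_zero {s q : P} (hq : q ≠ s) (h : C.layer q + 1 ≠ C.layer s) : C.bag s q = 0 := by
  by_contra h0
  exact h (C.resource s q hq (Nat.pos_of_ne_zero h0)).1

theorem bag_of_layer_eq [DecidableEq P] {s u : P} (h : C.layer u = C.layer s) :
    C.bag s u = if u = s then 1 else 0 := by
  split_ifs with hus
  · rw [hus, C.bag_self]
  · exact C.bag_eq_zero hus (by omega)

theorem sum_places_bag_self (s : P) : ∑ q ∈ C.places (C.layer s), C.bag s q = 1 := by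
  classical
  rw [Finset.sum_congr rfl fun u hu => C.bag_of_layer_eq (C.mem_places.1 hu),
    Finset.sum_ite_eq', if_pos (C.mem_places.2 rfl)]

theorem sum_places_bag_of_succ_eq {s : P} {l : ℕ} (hl : l + 1 = C.layer s) :
    ∑ q ∈ C.places l, C.bag s q = C.pot s := by
  classical
  have hs : s ∉ C.places l := fun h => by rw [C.mem_places] at h; omega
  have hrest : ∑ q ∈ C.places l, C.bag s q = ∑ q ∈ Finset.univ.erase s, C.bag s q := by
    refine Finset.sum_subset (fun q hq => Finset.mem_erase.2 ⟨?_, Finset.mem_univ q⟩) ?_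
    · rintro rfl
      exact hs hq
    · intro q hq hql
      refine C.bag_eq_zero (Finset.ne_of_mem_erase hq) fun h => hql (C.mem_places.2 ?_)
      omega
  have htotal := Finset.sum_erase_add Finset.univ (C.bag s) (Finset.mem_univ s)
  rw [C.bag_self] at htotal
  change _ = (∑ q, C.bag s q) - 1
  omega

theorem sum_places_bag_eq_zero {s : P} {l : ℕ} (h1 : l ≠ C.layer s) (h2 : l + 1 ≠ C.layer s) :
    ∑ q ∈ C.places l, C.bag s q = 0 :=
  Finset.sum_eq_zero fun q hq => by
    have hq := C.mem_places.1 hq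
    exact C.bag_eq_zero (by rintro rfl; exact h1 hq.symm) (by omega)

theorem pot_eq_zero_of_layer_eq_one {s : P} (hs : C.layer s = 1) : C.pot s = 0 := by
  rw [← C.sum_places_bag_of_succ_eq (l := 0) hs.symm, places_zero, Finset.sum_empty]

theorem pot_le_POT (u : P) : C.pot u ≤ C.POT (C.layer u) :=
  Finset.le_sup (C.mem_places.2 rfl)

theorem pot_eq_POT_of_bag_pos {s q : P} (hq : q ≠ s) (h : 0 < C.bag s q) :
    C.pot q = C.POT (C.layer q) :=
  le_antisymm (C.pot_le_POT q)
    (Finset.sup_le fun r hr => (C.resource s q hq h).2 r (C.mem_places.1 hr))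

noncomputable def source (t : T) : P := (C.bag_surj _ ⟨t, Or.inl rfl⟩).choose

noncomputable def target (t : T) : P := (C.bag_surj _ ⟨t, Or.inr rfl⟩).choose

theorem bag_source (t : T) : C.bag (C.source t) = fun q => C.Wm q t :=
  (C.bag_surj _ ⟨t, Or.inl rfl⟩).choose_spec

theorem bag_target (t : T) : C.bag (C.target t) = fun q => C.Wp q t :=
  (C.bag_surj _ ⟨t, Or.inr rfl⟩).choose_spec

theorem Wm_eq_bag_source (q : P) (t : T) : C.Wm q t = C.bag (C.source t) q := by
  rw [bag_source]

theorem Wp_eq_bag_target (q : P) (t : T) : C.Wp q t = C.bag (C.target t) q := by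
  rw [bag_target]

theorem source_eq_of_bag_eq {s : P} {t : T} (h : C.bag s = fun q => C.Wm q t) :
    C.source t = s :=
  C.bag_inj ((C.bag_source t).trans h.symm)

theorem layer_target (t : T) : C.layer (C.target t) = C.layer (C.source t) :=
  (C.edge_layer _ _ ⟨t, C.bag_source t, C.bag_target t⟩).symm

theorem source_ne_target (t : T) : C.source t ≠ C.target t := fun h =>
  C.no_useless t ((C.bag_source t).symm.trans (h ▸ C.bag_target t))

theorem transIn_iff {S : ℕ → Prop} {t : T} : C.transIn S t ↔ S (C.layer (C.source t)) := by
  refine ⟨fun ⟨p, hp, hb⟩ => ?_, fun h => ⟨C.source t, h, C.bag_source t⟩⟩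
  rwa [C.source_eq_of_bag_eq hb]

variable {m : P → ℕ} {t : T}

theorem fire_add_bag_source (hen : Enabled C.Wm m t) (q : P) :
    Fire C.Wm C.Wp m t q + C.bag (C.source t) q = m q + C.bag (C.target t) q := by
  rw [← C.Wm_eq_bag_source, ← C.Wp_eq_bag_target]
  exact fire_add_Wm hen q

theorem fire_of_layer_ne (hen : Enabled C.Wm m t) {u : P} (h1 : C.layer u ≠ C.layer (C.source t))
    (h2 : C.layer u + 1 ≠ C.layer (C.source t)) : Fire C.Wm C.Wp m t u = m u := by
  have hsrc := C.bag_eq_zero (fun h => h1 (by rw [h])) h2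
  have htgt := C.bag_eq_zero (s := C.target t) (q := u) (fun h => h1 (by rw [h, C.layer_target]))
    (by rwa [C.layer_target])
  have := C.fire_add_bag_source hen u
  omega

theorem fire_add_ite [DecidableEq P] (hen : Enabled C.Wm m t) {u : P}
    (hu : C.layer u = C.layer (C.source t)) :
    Fire C.Wm C.Wp m t u + (if u = C.source t then 1 else 0)
      = m u + (if u = C.target t then 1 else 0) := by
  rw [← C.bag_of_layer_eq hu, ← C.bag_of_layer_eq (hu.trans (C.layer_target t).symm)]
  exact C.fire_add_bag_source hen u

theorem fire_target_pos (hen : Enabled C.Wm m t) : 0 < Fire C.Wm C.Wp m t (C.target t) := by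
  classical
  have := C.fire_add_ite hen (C.layer_target t)
  rw [if_neg (C.source_ne_target t).symm, if_pos rfl] at this
  omega

theorem sum_places_fire_add (hen : Enabled C.Wm m t) (l : ℕ) :
    ∑ q ∈ C.places l, Fire C.Wm C.Wp m t q + ∑ q ∈ C.places l, C.bag (C.source t) q
      = ∑ q ∈ C.places l, m q + ∑ q ∈ C.places l, C.bag (C.target t) q := by
  rw [← Finset.sum_add_distrib, ← Finset.sum_add_distrib]
  exact Finset.sum_congr rfl fun q _ => C.fire_add_bag_source hen q

theorem sum_places_fire_of_ne (hen : Enabled C.Wm m t) {l : ℕ}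
    (hl : l + 1 ≠ C.layer (C.source t)) :
    ∑ q ∈ C.places l, Fire C.Wm C.Wp m t q = ∑ q ∈ C.places l, m q := by
  have h := C.sum_places_fire_add hen l
  have htgt := C.layer_target t
  by_cases hsrc : l = C.layer (C.source t)
  · subst hsrc
    have htgt_self := C.sum_places_bag_self (C.target t)
    rw [htgt] at htgt_self
    rw [C.sum_places_bag_self, htgt_self] at h
    omega
  · rw [C.sum_places_bag_eq_zero hsrc hl,
      C.sum_places_bag_eq_zero (htgt ▸ hsrc) (htgt ▸ hl)] at h
    omega

theorem pot_source_le_sum (hen : Enabled C.Wm m t) {l : ℕ} (hl : l + 1 = C.layer (C.source t)) :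
    C.pot (C.source t) ≤ ∑ q ∈ C.places l, m q := by
  rw [← C.sum_places_bag_of_succ_eq hl]
  exact Finset.sum_le_sum fun q _ => C.Wm_eq_bag_source q t ▸ hen q

theorem pot_target_le_sum_fire (hen : Enabled C.Wm m t) {l : ℕ}
    (hl : l + 1 = C.layer (C.source t)) :
    C.pot (C.target t) ≤ ∑ q ∈ C.places l, Fire C.Wm C.Wp m t q := by
  have h := C.sum_places_fire_add hen l
  rw [C.sum_places_bag_of_succ_eq hl,
    C.sum_places_bag_of_succ_eq (hl.trans (C.layer_target t).symm)] at h
  have := C.pot_source_le_sum hen hl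
  omega

/-- Outside the layer of `t`, firing `t` only touches places of the layer below that occur in
its bags, and these have maximal potential in their layer. -/
theorem pot_eq_POT_of_fire_ne (hen : Enabled C.Wm m t) {u : P}
    (hu : Fire C.Wm C.Wp m t u ≠ m u) (hl : C.layer u ≠ C.layer (C.source t)) :
    C.pot u = C.POT (C.layer u) := by
  have hbal := C.fire_add_bag_source hen u
  by_cases hsrc : C.bag (C.source t) u = 0
  · refine C.pot_eq_POT_of_bag_pos (s := C.target t) (fun h => hl ?_) (by omega)
    rw [h, C.layer_target]
  · exact C.pot_eq_POT_of_bag_pos (fun h => hl (h ▸ rfl)) (Nat.pos_of_ne_zero hsrc)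

theorem liveSet_iff {j : ℕ} (hj : j ≠ Nn) :
    C.LiveSet j m ↔ C.POT (j + 1) ≤ ∑ q ∈ C.places j, m q ∨
      ∃ u, C.layer u = j + 1 ∧ 0 < m u ∧ C.pot u ≤ ∑ q ∈ C.places j, m q := by
  rw [LiveSet, if_neg hj, minPotD_le_iff]
  · simp only [Finset.mem_filter, mem_places, and_assoc]
  · intro u hu
    rw [← (C.mem_places.1 (Finset.mem_filter.1 hu).1)]
    exact C.pot_le_POT u

theorem liveSet_fire {j : ℕ} (hj : j ≠ Nn) (hen : Enabled C.Wm m t) (h : C.LiveSet j m) :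
    C.LiveSet j (Fire C.Wm C.Wp m t) := by
  rw [C.liveSet_iff hj] at h ⊢
  by_cases hk : j + 1 = C.layer (C.source t)
  · exact Or.inr ⟨C.target t, (C.layer_target t).trans hk.symm, C.fire_target_pos hen,
      C.pot_target_le_sum_fire hen hk⟩
  rw [C.sum_places_fire_of_ne hen hk]
  obtain h | ⟨u, hu, hmu, hpot⟩ := h
  · exact Or.inl h
  by_cases hfu : Fire C.Wm C.Wp m t u = m u
  · exact Or.inr ⟨u, hu, hfu ▸ hmu, hpot⟩
  · rw [← hu, ← C.pot_eq_POT_of_fire_ne hen hfu (hu ▸ hk)]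
    exact Or.inl hpot

def LiveBelow (k : ℕ) (m : P → ℕ) : Prop := ∀ j, 1 ≤ j → j < k → C.LiveSet j m

theorem liveBelow_of_reachIn {k : ℕ} (hk : k ≤ Nn) {S : T → Prop} {m' : P → ℕ}
    (hr : ReachIn C.Wm C.Wp S m m') (h : C.LiveBelow k m) : C.LiveBelow k m' := fun j h1 h2 =>
  hr.preserve (fun _ _ _ hen hlive => C.liveSet_fire (by omega) hen hlive) (h j h1 h2)

theorem fire_of_lt_layer {h : ℕ} (ht : C.transIn (· ≤ h) t) (hen : Enabled C.Wm m t) {u : P}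
    (hu : h < C.layer u) : Fire C.Wm C.Wp m t u = m u := by
  have := C.transIn_iff.1 ht
  exact C.fire_of_layer_ne hen (by omega) (by omega)

theorem reachIn_apply_of_lt_layer {h : ℕ} {m' : P → ℕ}
    (hr : ReachIn C.Wm C.Wp (C.transIn (· ≤ h)) m m') {u : P} (hu : h < C.layer u) :
    m' u = m u :=
  hr.preserve (Q := fun m'' => m'' u = m u)
    (fun _ _ ht hen hm => (C.fire_of_lt_layer ht hen hu).trans hm) rfl

theorem reachIn_sum_places {h l : ℕ} (hl : h ≤ l) {m' : P → ℕ}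
    (hr : ReachIn C.Wm C.Wp (C.transIn (· ≤ h)) m m') :
    ∑ q ∈ C.places l, m' q = ∑ q ∈ C.places l, m q :=
  hr.preserve (Q := fun m'' => ∑ q ∈ C.places l, m'' q = ∑ q ∈ C.places l, m q)
    (fun _ _ ht hen hm => by
      have := C.transIn_iff.1 ht
      rw [C.sum_places_fire_of_ne hen (by omega), hm]) rfl

def Gathers (k : ℕ) : Prop :=
  ∀ p, C.layer p = k + 1 → ∀ m : P → ℕ, C.pot p ≤ ∑ q ∈ C.places k, m q → C.LiveBelow k m →
    ∃ m', ReachIn C.Wm C.Wp (C.transIn (· ≤ k)) m m' ∧ ∀ q, C.layer q = k → C.bag p q ≤ m' q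

theorem gathers_zero : C.Gathers 0 := fun _ _ m _ _ =>
  ⟨m, .refl, fun q hq => absurd (C.layer_pos q) (by omega)⟩

theorem enabled_of_gathered {k : ℕ} (hs : C.layer (C.source t) = k + 1)
    (hms : 0 < m (C.source t)) (hg : ∀ q, C.layer q = k → C.bag (C.source t) q ≤ m q) :
    Enabled C.Wm m t := by
  intro u
  rw [C.Wm_eq_bag_source]
  by_cases hu : u = C.source t
  · rw [hu, C.bag_self]
    exact hms
  by_cases hlu : C.layer u = k
  · exact hg u hlu
  · rw [C.bag_eq_zero hu (by omega)]
    exact Nat.zero_le _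

theorem exists_reachIn_fire [DecidableEq P] {k : ℕ} (G : C.Gathers k)
    (hs : C.layer (C.source t) = k + 1) (hms : 0 < m (C.source t))
    (hpot : C.pot (C.source t) ≤ ∑ q ∈ C.places k, m q) (hlive : C.LiveBelow k m) :
    ∃ m', ReachIn C.Wm C.Wp (C.transIn (· ≤ k + 1)) m m' ∧
      (∀ u, C.layer u = k + 1 →
        m' u + (if u = C.source t then 1 else 0) = m u + (if u = C.target t then 1 else 0)) ∧
      C.pot (C.target t) ≤ ∑ q ∈ C.places k, m' q := by
  obtain ⟨m1, hr1, hg⟩ := G _ hs m hpot hlive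
  have hfix : ∀ u, C.layer u = k + 1 → m1 u = m u := fun u hu =>
    C.reachIn_apply_of_lt_layer hr1 (by omega)
  have hen : Enabled C.Wm m1 t := C.enabled_of_gathered hs (by rwa [hfix _ hs]) hg
  have hr1' : ReachIn C.Wm C.Wp (C.transIn (· ≤ k + 1)) m m1 :=
    hr1.mono fun t' ht' => C.transIn_iff.2 (Nat.le_succ_of_le (C.transIn_iff.1 ht'))
  refine ⟨Fire C.Wm C.Wp m1 t, hr1'.tail ⟨t, C.transIn_iff.2 hs.le, hen, rfl⟩,
    fun u hu => ?_, C.pot_target_le_sum_fire hen hs.symm⟩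
  rw [← hfix u hu]
  exact C.fire_add_ite hen (hu.trans hs.symm)

theorem exists_reachIn_move [DecidableEq P] {k : ℕ} (G : C.Gathers k) {s s' : P}
    (hpath : Relation.ReflTransGen (BagEdge C.Wm C.Wp) (C.bag s) (C.bag s'))
    (hs : C.layer s = k + 1) (hms : 0 < m s) (hpot : C.pot s ≤ ∑ q ∈ C.places k, m q)
    (hlive : C.LiveBelow k m) :
    ∃ m', ReachIn C.Wm C.Wp (C.transIn (· ≤ k + 1)) m m' ∧
      ∀ u, C.layer u = k + 1 →
        m' u + (if u = s then 1 else 0) = m u + (if u = s' then 1 else 0) := by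
  generalize hb : C.bag s = b at hpath
  induction hpath using Relation.ReflTransGen.head_induction_on generalizing s m with
  | refl =>
    obtain rfl := C.bag_inj hb
    exact ⟨m, .refl, fun _ _ => rfl⟩
  | head hedge _ ih =>
    obtain ⟨t, hbt, hct⟩ := hedge
    obtain rfl := C.source_eq_of_bag_eq (hb.trans hbt)
    obtain ⟨m2, hr2, hmove2, hpot2⟩ := C.exists_reachIn_fire G hs hms hpot hlive
    have hm2 : 0 < m2 (C.target t) := by
      have := hmove2 _ ((C.layer_target t).trans hs)
      rw [if_neg (C.source_ne_target t).symm, if_pos rfl] at this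
      omega
    have hk : k ≤ Nn := by have := C.layer_le (C.source t); omega
    obtain ⟨m', hr', hmove'⟩ := ih ((C.layer_target t).trans hs) hm2 hpot2
      (C.liveBelow_of_reachIn hk hr2 hlive) ((C.bag_target t).trans hct.symm)
    refine ⟨m', hr2.trans hr', fun u hu => ?_⟩
    have := hmove2 u hu
    have := hmove' u hu
    omega

theorem exists_surplus_min_pot {p : P} {l : ℕ} (hl : l + 1 = C.layer p) {q₀ : P}
    (hq₀ : C.layer q₀ = l) (h₀ : C.bag p q₀ < m q₀) :
    ∃ q, C.layer q = l ∧ C.bag p q < m q ∧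
      ∀ v, C.layer v = l → 0 < m v → C.pot q ≤ C.pot v := by
  classical
  obtain ⟨u, hu, hmin⟩ := Finset.exists_min_image ((C.places l).filter (0 < m ·)) C.pot
    ⟨q₀, Finset.mem_filter.2 ⟨C.mem_places.2 hq₀, by omega⟩⟩
  obtain ⟨hul, hmu⟩ := Finset.mem_filter.1 hu
  rw [C.mem_places] at hul
  have hmin' : ∀ v, C.layer v = l → 0 < m v → C.pot u ≤ C.pot v := fun v hv hmv =>
    hmin v (Finset.mem_filter.2 ⟨C.mem_places.2 hv, hmv⟩)
  by_cases hsur : C.bag p u < m u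
  · exact ⟨u, hul, hsur, hmin'⟩
  -- otherwise `u` occurs in the bag of `p`, so its potential is maximal in layer `l`
  have hmax := C.pot_eq_POT_of_bag_pos (s := p) (q := u) (by rintro rfl; omega) (by omega)
  refine ⟨q₀, hq₀, h₀, fun v hv hmv => ?_⟩
  calc C.pot q₀ ≤ C.POT (C.layer q₀) := C.pot_le_POT q₀
    _ = C.pot u := by rw [hmax, hq₀, hul]
    _ ≤ C.pot v := hmin' v hv hmv

theorem pot_le_sum_of_le_marked {k : ℕ} {s : P} (hs : C.layer s = k + 1)
    (hmin : ∀ v, C.layer v = k + 1 → 0 < m v → C.pot s ≤ C.pot v)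
    (hlive : C.LiveBelow (k + 1) m) : C.pot s ≤ ∑ q ∈ C.places k, m q := by
  rcases Nat.eq_zero_or_pos k with rfl | hk
  · rw [C.pot_eq_zero_of_layer_eq_one hs]
    exact Nat.zero_le _
  have hkN : k ≠ Nn := by have := C.layer_le s; omega
  obtain h | ⟨v, hv, hmv, hpot⟩ := (C.liveSet_iff hkN).1 (hlive k hk (by omega))
  · exact (C.pot_le_POT s).trans (by rwa [hs])
  · exact (hmin v hv hmv).trans hpot

theorem gathers_succ_step {k : ℕ} (G : C.Gathers k) {p : P} (hp : C.layer p = k + 1 + 1)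
    (hm : C.pot p ≤ ∑ q ∈ C.places (k + 1), m q) (hlive : C.LiveBelow (k + 1) m) {r : P}
    (hr : C.layer r = k + 1) (hmr : m r < C.bag p r) :
    ∃ m', ReachIn C.Wm C.Wp (C.transIn (· ≤ k + 1)) m m' ∧
      ∑ q ∈ C.places (k + 1), (C.bag p q - m' q) < ∑ q ∈ C.places (k + 1), (C.bag p q - m q) ∧
      C.pot p ≤ ∑ q ∈ C.places (k + 1), m' q ∧ C.LiveBelow (k + 1) m' := by
  classical
  have hkN : k + 1 ≤ Nn := by have := C.layer_le p; omega
  obtain ⟨q₀, hq₀, h₀⟩ := exists_lt_of_sum_le_of_lt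
    (by rwa [C.sum_places_bag_of_succ_eq hp.symm]) (C.mem_places.2 hr) hmr
  obtain ⟨s, hs, hsur, hmin⟩ := C.exists_surplus_min_pot hp.symm (C.mem_places.1 hq₀) h₀
  obtain ⟨m', hr', hmove⟩ := C.exists_reachIn_move G (C.layer_conn s r (hs.trans hr.symm)) hs
    (by omega) (C.pot_le_sum_of_le_marked hs hmin hlive) fun j h1 h2 => hlive j h1 (by omega)
  refine ⟨m', hr', sum_tsub_lt_of_move (C.mem_places.2 hr) (by rintro rfl; omega) hsur hmr
    fun u hu => hmove u (C.mem_places.1 hu), ?_, C.liveBelow_of_reachIn hkN hr' hlive⟩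
  rwa [C.reachIn_sum_places le_rfl hr']

theorem gathers_succ {k : ℕ} (G : C.Gathers k) : C.Gathers (k + 1) := by
  intro p hp m hm hlive
  induction hd : ∑ q ∈ C.places (k + 1), (C.bag p q - m q) using Nat.strong_induction_on
    generalizing m with
  | _ d ih =>
    by_cases hdone : ∀ q, C.layer q = k + 1 → C.bag p q ≤ m q
    · exact ⟨m, .refl, hdone⟩
    push Not at hdone
    obtain ⟨r, hr, hmr⟩ := hdone
    obtain ⟨m', hr', hlt, hm', hlive'⟩ := C.gathers_succ_step G hp hm hlive hr hmr
    obtain ⟨m'', hr'', hg⟩ := ih _ (hd ▸ hlt) m' hm' hlive' rfl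
    exact ⟨m'', hr'.trans hr'', hg⟩

theorem gathers (k : ℕ) : C.Gathers k := by
  induction k with
  | zero => exact C.gathers_zero
  | succ k G => exact C.gathers_succ G

end ClosedPi3

namespace OpenPi3

variable {P T : Type} [Fintype P] [Fintype T] {Nn : ℕ} (O : OpenPi3 P T Nn)

theorem mem_places {k : ℕ} {q : P} : q ∈ O.places k ↔ O.layer q = k := by
  simp [places]

theorem closed_places {l : ℕ} (hl : l ≠ Nn) :
    O.closed.places l = (O.places l).map .some := by
  ext (_ | q)
  · simp [ClosedPi3.places, O.pext_layer, Ne.symm hl]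
  · simp [ClosedPi3.mem_places, O.mem_places, layer]

theorem sum_closed_places_elim' {l : ℕ} (hl : l ≠ Nn) (m : P → ℕ) :
    ∑ q ∈ O.closed.places l, Option.elim' 0 m q = ∑ q ∈ O.places l, m q := by
  rw [O.closed_places hl, Finset.sum_map]
  rfl

theorem liveSet_elim' {j : ℕ} (hj : j + 1 < Nn) {m : P → ℕ} (h : O.LiveSet j m) :
    O.closed.LiveSet j (Option.elim' 0 m) := by
  rw [LiveSet, if_neg (by omega), if_neg (by omega), POT, if_neg (by omega)] at h
  rw [ClosedPi3.LiveSet, if_neg (by omega), ClosedPi3.POT, O.closed_places (l := j + 1) (by omega),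
    Finset.filter_map, minPotD_map, Finset.sup_map, O.sum_closed_places_elim' (by omega)]
  exact h

theorem gathers {k : ℕ} {p : Option P} (hp : O.closed.layer p = k + 1) {m : P → ℕ}
    (hm : O.closed.pot p ≤ ∑ q ∈ O.places k, m q)
    (hlive : ∀ j, 1 ≤ j → j < k → O.LiveSet j m) :
    ∃ m', ReachIn O.Wm O.Wp (O.transIn (· ≤ k)) m m' ∧
      ∀ q, O.layer q = k → O.closed.bag p (some q) ≤ m' q := by
  have hk : k < Nn := by have := O.closed.layer_le p; omega
  obtain ⟨m', hr, hg⟩ := O.closed.gathers k p hp (Option.elim' 0 m)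
    (by rwa [O.sum_closed_places_elim' hk.ne])
    fun j h1 h2 => O.liveSet_elim' (by omega) (hlive j h1 h2)
  exact ⟨m' ∘ some, hr.comp some, fun q hq => hg (some q) hq⟩

end OpenPi3

/-- gathering the resources of a place `p ∈ P_i^*` on layer
`i − 1`, using only transitions of layers `≤ i − 1`. -/
theorem stmt_12 :
    (∀ (P T : Type) [Fintype P] [Fintype T] (Nn : ℕ) (C : ClosedPi3 P T Nn),
      ∀ i ∈ Finset.Icc 1 Nn, ∀ p : P, C.layer p = i →
        ∀ m : P → ℕ, C.pot p ≤ ∑ q ∈ C.places (i - 1), m q →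
          (∀ j ∈ Finset.Icc 1 (i - 1), C.LiveSet j m) →
          ∃ m', ReachIn C.Wm C.Wp (C.transIn (· ≤ i - 1)) m m' ∧
            ∀ q, C.layer q = i - 1 → C.bag p q ≤ m' q) ∧
    (∀ (P T : Type) [Fintype P] [Fintype T] (Nn : ℕ) (O : OpenPi3 P T Nn),
      ∀ i ∈ Finset.Icc 1 Nn, ∀ p' : Option P, O.closed.layer p' = i →
        ∀ m : P → ℕ, O.closed.pot p' ≤ ∑ q ∈ O.places (i - 1), m q →
          (∀ j ∈ Finset.Icc 1 (i - 1), O.LiveSet j m) →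
          ∃ m', ReachIn O.Wm O.Wp (O.transIn (· ≤ i - 1)) m m' ∧
            ∀ q, O.layer q = i - 1 → O.closed.bag p' (some q) ≤ m' q) := by
  refine ⟨fun P T _ _ Nn C i hi p hp m hm hlive => ?_,
    fun P T _ _ Nn O i hi p hp m hm hlive => ?_⟩
  all_goals
    obtain ⟨k, rfl⟩ : ∃ k, i = k + 1 := ⟨i - 1, by have := (Finset.mem_Icc.1 hi).1; omega⟩
    simp only [Nat.add_sub_cancel] at hm hlive ⊢
  · exact C.gathers k p hp m hm fun j h1 h2 => hlive j (Finset.mem_Icc.2 ⟨h1, h2.le⟩)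
  · exact O.gathers hp hm fun j h1 h2 => hlive j (Finset.mem_Icc.2 ⟨h1, h2.le⟩)
end

section
/- Let N be a weakly reversible Petri net, i.e., a Petri net in which every connected component of the bag graph is strongly connected. Then reachability is symmetric: for all markings m and m', if m'∈R(m) then m∈R(m'). -/
open Finset

/-- in a weakly reversible Petri net, reachability is
symmetric. -/
theorem stmt_15 (P T : Type) [Fintype P] [Fintype T] (Wm Wp : P → T → ℕ)
    (h1 : ∀ t, (fun p => Wm p t) ≠ (fun p => Wp p t))
    (h2 : ∀ t t' : T, (fun p => Wm p t) = (fun p => Wm p t') →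
      (fun p => Wp p t) = (fun p => Wp p t') → t = t')
    (hwr : WeaklyReversible Wm Wp) :
    ∀ m m' : P → ℕ, Reach Wm Wp m m' → Reach Wm Wp m' m := by
  have key : ∀ m m' : P → ℕ, Step Wm Wp m m' → Reach Wm Wp m' m := by
    rintro m m' ⟨t, ht, rfl⟩
    have hμ : ∀ c c' : P → ℕ, Relation.ReflTransGen (BagEdge Wm Wp) c c' →
        Reach Wm Wp (fun p => m p - Wm p t + c p) (fun p => m p - Wm p t + c' p) := by
      intro c c' h
      induction h with
      | refl => exact Relation.ReflTransGen.refl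
      | tail _ hde ih =>
        obtain ⟨s, hs1, hs2⟩ := hde
        refine ih.tail ⟨s, ?_, ?_⟩
        · intro p
          simp [hs1]
        · funext p
          simp [Fire, hs1, hs2, Nat.add_sub_cancel]
    have hpath : Relation.ReflTransGen (BagEdge Wm Wp)
        (fun p => Wp p t) (fun p => Wm p t) :=
      hwr _ _ (Relation.ReflTransGen.single (Or.inr ⟨t, rfl, rfl⟩))
    have := hμ _ _ hpath
    have e1 : (fun p => m p - Wm p t + Wm p t) = m := by
      funext p; exact Nat.sub_add_cancel (ht p)
    rw [e1] at this
    exact this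
  intro m m' h
  induction h with
  | refl => exact Relation.ReflTransGen.refl
  | tail _ hstep ih => exact Relation.ReflTransGen.trans (key _ _ hstep) ih
end

section
/- Let (N,λ) be a stochastic Π²-net, choose for each bag b a witness wit_b∈ℚ^P, and let vis be a positive vector indexed by bags satisfying vis·𝐏=vis, where 𝐏 is the routing matrix. For markings m define v(m)=Π_{b bag}(vis(b)/λ(b))^{m·wit_b} (positive real powers with rational exponents m·wit_b). Then for every marking m0 and every m'∈R(m0), Σ_{m∈R(m0)} v(m)·Q(m,m') = 0, where Q is the infinitesimal generator on R(m0) and the sum has only finitely many nonzero terms. -/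
open Finset

section Stochastic

variable {P T : Type} [Fintype P] [Fintype T]

/-- The (finite) set of bags of the net. -/
noncomputable def Bags (Wm Wp : P → T → ℕ) : Finset (P → ℕ) :=
  (Finset.univ.image fun t => fun p => Wm p t) ∪
    (Finset.univ.image fun t => fun p => Wp p t)

/-- The firing rate `λ(b)` of a bag `b`. -/
noncomputable def lamBag (Wm : P → T → ℕ) (lam : T → ℝ) (b : P → ℕ) : ℝ :=
  ∑ t ∈ Finset.univ.filter (fun t => (fun p => Wm p t) = b), lam t

/-- The routing matrix `𝐏(b, b')` of bags. -/
noncomputable def Pmat (Wm Wp : P → T → ℕ) (lam : T → ℝ) (b b' : P → ℕ) : ℝ :=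
  (∑ t ∈ Finset.univ.filter
      (fun t => (fun p => Wm p t) = b ∧ (fun p => Wp p t) = b'), lam t) /
    lamBag Wm lam b

/-- The product-form vector
`v(m) = Π_b (vis(b)/λ(b))^(m · wit_b)` (real powers with exponent the rational
number `m · wit_b`). -/
noncomputable def vProd (Wm Wp : P → T → ℕ) (lam : T → ℝ)
    (wit : (P → ℕ) → (P → ℚ)) (vis : (P → ℕ) → ℝ) (m : P → ℕ) : ℝ :=
  ∏ b ∈ Bags Wm Wp,
    (vis b / lamBag Wm lam b) ^ (((∑ p, (m p : ℚ) * wit b p : ℚ) : ℝ))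

open Classical in
/-- The infinitesimal generator `Q` of the CTMC. -/
noncomputable def Qgen (Wm Wp : P → T → ℕ) (lam : T → ℝ) (m m' : P → ℕ) : ℝ :=
  if m' = m then
    -∑ t ∈ Finset.univ.filter
        (fun t => Enabled Wm m t ∧ Fire Wm Wp m t ≠ m), lam t
  else
    ∑ t ∈ Finset.univ.filter
        (fun t => Enabled Wm m t ∧ Fire Wm Wp m t = m'), lam t

end Stochastic

section MyAux
variable {P T : Type} [Fintype P] [Fintype T]

lemma my_mem_Bags_iff (Wm Wp : P → T → ℕ) (b : P → ℕ) :
    b ∈ Bags Wm Wp ↔ IsBag Wm Wp b := by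
  unfold Bags IsBag
  simp only [Finset.mem_union, Finset.mem_image, Finset.mem_univ, true_and]
  constructor
  · rintro (⟨t, ht⟩ | ⟨t, ht⟩)
    exacts [⟨t, Or.inl ht.symm⟩, ⟨t, Or.inr ht.symm⟩]
  · rintro ⟨t, ht | ht⟩
    exacts [Or.inl ⟨t, ht.symm⟩, Or.inr ⟨t, ht.symm⟩]

lemma my_bag_in {Wm Wp : P → T → ℕ} (hwr : WeaklyReversible Wm Wp) {b : P → ℕ}
    (hb : IsBag Wm Wp b) : ∃ t, b = fun p => Wm p t := by
  obtain ⟨t, ht | ht⟩ := hb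
  · exact ⟨t, ht⟩
  · have hpath : Relation.ReflTransGen (BagEdge Wm Wp) b (fun p => Wm p t) :=
      hwr _ _ (Relation.ReflTransGen.single (Or.inr ⟨t, rfl, ht⟩))
    rcases Relation.ReflTransGen.cases_head hpath with heq | ⟨c, ⟨t', ht', _⟩, _⟩
    exacts [⟨t, heq⟩, ⟨t', ht'⟩]

lemma my_lamBag_pos {Wm Wp : P → T → ℕ} (hwr : WeaklyReversible Wm Wp)
    {lam : T → ℝ} (hlam : ∀ t, 0 < lam t) {b : P → ℕ} (hb : IsBag Wm Wp b) :
    0 < lamBag Wm lam b := by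
  classical
  obtain ⟨t, ht⟩ := my_bag_in hwr hb
  exact Finset.sum_pos (fun t' _ => hlam t')
    ⟨t, Finset.mem_filter.2 ⟨Finset.mem_univ t, ht.symm⟩⟩

lemma my_reach_shift {Wm Wp : P → T → ℕ} {b b'' : P → ℕ}
    (hpath : Relation.ReflTransGen (BagEdge Wm Wp) b b'') (m : P → ℕ)
    (hb : ∀ p, b p ≤ m p) :
    Reach Wm Wp m (fun p => m p - b p + b'' p) := by
  induction hpath with
  | refl =>
      have h : (fun p => m p - b p + b p) = m := funext fun p => by have := hb p; omega
      rw [h]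
      exact Relation.ReflTransGen.refl
  | @tail c d _ hedge ih =>
      obtain ⟨t, hc, hd⟩ := hedge
      refine Relation.ReflTransGen.tail ih ⟨t, ?_, ?_⟩
      · intro p
        have h1 := congrFun hc p
        have h2 := hb p
        simp only [h1.symm] at *
        omega
      · funext p
        have h1 := congrFun hc p
        have h2 := congrFun hd p
        have h3 := hb p
        simp only [Fire]
        omega

lemma my_pred_reach {Wm Wp : P → T → ℕ} (hwr : WeaklyReversible Wm Wp)
    (m' : P → ℕ) (t : T) (h : ∀ p, Wp p t ≤ m' p) :
    Reach Wm Wp m' (fun p => m' p - Wp p t + Wm p t) :=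
  my_reach_shift (hwr _ _ (Relation.ReflTransGen.single (Or.inr ⟨t, rfl, rfl⟩))) m' h

end MyAux


section MyAux2
variable {P T : Type} [Fintype P] [Fintype T]

lemma my_vProd_pred {Wm Wp : P → T → ℕ} (hwr : WeaklyReversible Wm Wp)
    (h1 : ∀ t, (fun p => Wm p t) ≠ (fun p => Wp p t))
    {lam : T → ℝ} (hlam : ∀ t, 0 < lam t)
    {wit : (P → ℕ) → (P → ℚ)} (hwit : ∀ b ∈ Bags Wm Wp, IsWitness Wm Wp b (wit b))
    {vis : (P → ℕ) → ℝ} (hvis : ∀ b ∈ Bags Wm Wp, 0 < vis b)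
    (m' : P → ℕ) (t : T) (h : ∀ p, Wp p t ≤ m' p) :
    vProd Wm Wp lam wit vis (fun p => m' p - Wp p t + Wm p t)
      = vProd Wm Wp lam wit vis m' *
        ((vis (fun p => Wm p t) / lamBag Wm lam (fun p => Wm p t)) *
         (vis (fun p => Wp p t) / lamBag Wm lam (fun p => Wp p t))⁻¹) := by
  classical
  set g : P → ℕ := fun p => m' p - Wp p t + Wm p t with hg
  have hbin : (fun p => Wm p t) ∈ Bags Wm Wp :=
    (my_mem_Bags_iff Wm Wp _).2 ⟨t, Or.inl rfl⟩
  have hbout : (fun p => Wp p t) ∈ Bags Wm Wp :=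
    (my_mem_Bags_iff Wm Wp _).2 ⟨t, Or.inr rfl⟩
  have hrpos : ∀ b ∈ Bags Wm Wp, 0 < vis b / lamBag Wm lam b := fun b hb =>
    div_pos (hvis b hb) (my_lamBag_pos hwr hlam ((my_mem_Bags_iff Wm Wp b).1 hb))
  have key : ∀ b ∈ Bags Wm Wp,
      (vis b / lamBag Wm lam b) ^ (((∑ p, (g p : ℚ) * wit b p : ℚ) : ℝ)) =
      (vis b / lamBag Wm lam b) ^ (((∑ p, (m' p : ℚ) * wit b p : ℚ) : ℝ)) *
        (if b = (fun p => Wm p t) then vis b / lamBag Wm lam b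
         else if b = (fun p => Wp p t) then (vis b / lamBag Wm lam b)⁻¹ else 1) := by
    intro b hb
    have hdiff : (∑ p, (g p : ℚ) * wit b p) =
        (∑ p, (m' p : ℚ) * wit b p) - IncDot Wm Wp (wit b) t := by
      rw [IncDot, ← Finset.sum_sub_distrib]
      refine Finset.sum_congr rfl fun p _ => ?_
      have hgp : (g p : ℚ) = (m' p : ℚ) - (Wp p t : ℚ) + (Wm p t : ℚ) := by
        have : (Wp p t : ℕ) ≤ m' p := h p
        simp only [hg]
        push_cast [Nat.cast_sub this]
        ring
      rw [hgp]; ring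
    obtain ⟨hA, hB, hC⟩ := hwit b hb t
    by_cases hb1 : b = (fun p => Wm p t)
    · have hd : (∑ p, (g p : ℚ) * wit b p) = (∑ p, (m' p : ℚ) * wit b p) + 1 := by
        rw [hdiff, hA hb1]; ring
      rw [hd, if_pos hb1]
      push_cast
      rw [Real.rpow_add (hrpos b hb), Real.rpow_one]
    · rw [if_neg hb1]
      by_cases hb2 : b = (fun p => Wp p t)
      · have hd : (∑ p, (g p : ℚ) * wit b p) = (∑ p, (m' p : ℚ) * wit b p) + (-1) := by
          rw [hdiff, hB hb2]; ring
        rw [hd, if_pos hb2]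
        push_cast
        rw [Real.rpow_add (hrpos b hb), Real.rpow_neg_one]
      · have hd : (∑ p, (g p : ℚ) * wit b p) = (∑ p, (m' p : ℚ) * wit b p) := by
          rw [hdiff, hC hb1 hb2]; ring
        rw [hd, if_neg hb2, mul_one]
  unfold vProd
  rw [Finset.prod_congr rfl key, Finset.prod_mul_distrib]
  congr 1
  have hne : (fun p => Wp p t) ≠ (fun p => Wm p t) := (h1 t).symm
  have hbout' : (fun p => Wp p t) ∈ (Bags Wm Wp).erase (fun p => Wm p t) :=
    Finset.mem_erase.2 ⟨hne, hbout⟩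
  rw [← Finset.mul_prod_erase _ _ hbin, if_pos rfl,
      ← Finset.mul_prod_erase _ _ hbout', if_neg hne, if_pos rfl,
      Finset.prod_eq_one, mul_one]
  intro b hbmem
  rw [if_neg (Finset.mem_erase.1 hbmem).1,
      if_neg (Finset.mem_erase.1 (Finset.mem_erase.1 hbmem).2).1]

end MyAux2


/-- balance equations for stochastic Π²-nets: `v · Q = 0` in
restriction to `R(m0)`, the sums having finite support. -/
theorem stmt_18 (P T : Type) [Fintype P] [Fintype T] (Wm Wp : P → T → ℕ)
    (h1 : ∀ t, (fun p => Wm p t) ≠ (fun p => Wp p t))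
    (h2 : ∀ t t' : T, (fun p => Wm p t) = (fun p => Wm p t') →
      (fun p => Wp p t) = (fun p => Wp p t') → t = t')
    (hpi2 : IsPi2 Wm Wp)
    (lam : T → ℝ) (hlam : ∀ t, 0 < lam t)
    (wit : (P → ℕ) → (P → ℚ))
    (hwit : ∀ b ∈ Bags Wm Wp, IsWitness Wm Wp b (wit b))
    (vis : (P → ℕ) → ℝ) (hvis : ∀ b ∈ Bags Wm Wp, 0 < vis b)
    (hbal : ∀ b' ∈ Bags Wm Wp,
      ∑ b ∈ Bags Wm Wp, vis b * Pmat Wm Wp lam b b' = vis b')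
    (m0 : P → ℕ) :
    ∀ m' : P → ℕ, Reach Wm Wp m0 m' →
      {m : P → ℕ | Reach Wm Wp m0 m ∧
          vProd Wm Wp lam wit vis m * Qgen Wm Wp lam m m' ≠ 0}.Finite ∧
      ∑ᶠ m ∈ {m : P → ℕ | Reach Wm Wp m0 m},
          vProd Wm Wp lam wit vis m * Qgen Wm Wp lam m m' = 0 := by
  classical
  obtain ⟨hwr, -⟩ := hpi2
  intro m' hm'
  set f : (P → ℕ) → ℝ :=
    fun m => vProd Wm Wp lam wit vis m * Qgen Wm Wp lam m m' with hf
  set g : T → (P → ℕ) := fun t => fun p => m' p - Wp p t + Wm p t with hgdef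
  set S0 : Finset (P → ℕ) := insert m' (Finset.univ.image g) with hS0
  have hsupp : ∀ m, Reach Wm Wp m0 m → f m ≠ 0 → m ∈ S0 := by
    intro m hr hne
    by_cases hmm : m = m'
    · subst hmm; exact Finset.mem_insert_self _ _
    · have hq : Qgen Wm Wp lam m m' ≠ 0 := by
        intro h0
        exact hne (by simp only [hf]; rw [h0, mul_zero])
      simp only [Qgen, if_neg (fun h : m' = m => hmm h.symm)] at hq
      obtain ⟨t, ht, -⟩ := Finset.exists_ne_zero_of_sum_ne_zero hq
      obtain ⟨-, hen, hfire⟩ := Finset.mem_filter.1 ht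
      have hm : m = g t := by
        funext p
        have hfp := congrFun hfire p
        have h2 := hen p
        simp only [Fire] at hfp
        simp only [hgdef]
        omega
      exact Finset.mem_insert.2 (Or.inr (Finset.mem_image.2 ⟨t, Finset.mem_univ t, hm.symm⟩))
  refine ⟨Set.Finite.subset S0.finite_toSet (fun m hm => hsupp m hm.1 hm.2), ?_⟩
  set t1 : Finset (P → ℕ) := S0.filter (fun m => Reach Wm Wp m0 m) with ht1
  rw [finsum_mem_eq_sum_of_inter_support_eq f (t := t1) ?hset]
  case hset =>
    ext m
    simp only [ht1, Set.mem_inter_iff, Set.mem_setOf_eq, Function.mem_support,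
      Finset.coe_filter]
    constructor
    · rintro ⟨hr, hne⟩; exact ⟨⟨hsupp m hr hne, hr⟩, hne⟩
    · rintro ⟨⟨-, hr⟩, hne⟩; exact ⟨hr, hne⟩
  have hm'mem : m' ∈ t1 := Finset.mem_filter.2 ⟨Finset.mem_insert_self _ _, hm'⟩
  rw [← Finset.add_sum_erase _ f hm'mem]
  -- the diagonal term
  have hQdiag : Qgen Wm Wp lam m' m'
      = -∑ t ∈ Finset.univ.filter (fun t => Enabled Wm m' t), lam t := by
    simp only [Qgen, if_pos rfl]
    have hfe : Finset.univ.filter (fun t => Enabled Wm m' t ∧ Fire Wm Wp m' t ≠ m')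
        = Finset.univ.filter (fun t => Enabled Wm m' t) := by
      ext t
      simp only [Finset.mem_filter, Finset.mem_univ, true_and, and_iff_left_iff_imp]
      intro hen hfeq
      apply h1 t
      funext p
      have hfp := congrFun hfeq p
      simp only [Fire] at hfp
      have := hen p
      omega
    rw [hfe]
    simp
  -- rewrite each off-diagonal term as a sum over transitions
  have hstep : ∀ m ∈ t1.erase m', f m
      = ∑ t ∈ (Finset.univ.filter (fun t => ∀ p, Wp p t ≤ m' p)).filter
          (fun t => g t = m), vProd Wm Wp lam wit vis (g t) * lam t := by
    intro m hm
    have hmne : m ≠ m' := (Finset.mem_erase.1 hm).1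
    have hfil : (Finset.univ.filter (fun t => ∀ p, Wp p t ≤ m' p)).filter
          (fun t => g t = m)
        = Finset.univ.filter (fun t => Enabled Wm m t ∧ Fire Wm Wp m t = m') := by
      ext t
      simp only [Finset.mem_filter, Finset.mem_univ, true_and]
      constructor
      · rintro ⟨hwp, hgm⟩
        have hgm' : ∀ p, m p = m' p - Wp p t + Wm p t := fun p => by
          have := congrFun hgm.symm p; simp only [hgdef] at this; omega
        constructor
        · intro p; have := hgm' p; have := hwp p; omega
        · funext p
          have := hgm' p; have := hwp p
          simp only [Fire]; omega
      · rintro ⟨hen, hfe⟩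
        have hfe' : ∀ p, m p - Wm p t + Wp p t = m' p := fun p => by
          have := congrFun hfe p; simp only [Fire] at this; omega
        have hwp : ∀ p, Wp p t ≤ m' p := fun p => by
          have := hfe' p; have := hen p; omega
        refine ⟨hwp, funext fun p => ?_⟩
        have := hfe' p; have := hen p
        simp only [hgdef]; omega
    simp only [hf]
    rw [Qgen, if_neg (fun h : m' = m => hmne h.symm), hfil, Finset.mul_sum]
    rw [← hfil]
    refine Finset.sum_congr rfl fun t ht => ?_
    rw [(Finset.mem_filter.1 ht).2]
  have hsum2 : ∑ m ∈ t1.erase m', f m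
      = ∑ t ∈ Finset.univ.filter (fun t => ∀ p, Wp p t ≤ m' p),
          vProd Wm Wp lam wit vis (g t) * lam t := by
    rw [Finset.sum_congr rfl hstep]
    refine Finset.sum_fiberwise_of_maps_to ?_ _
    intro t ht
    have hwp : ∀ p, Wp p t ≤ m' p := (Finset.mem_filter.1 ht).2
    have hgne : g t ≠ m' := by
      intro he
      apply h1 t
      funext p
      have := congrFun he p
      simp only [hgdef] at this
      have := hwp p
      omega
    refine Finset.mem_erase.2 ⟨hgne, Finset.mem_filter.2 ⟨?_, ?_⟩⟩
    · exact Finset.mem_insert.2 (Or.inr (Finset.mem_image.2 ⟨t, Finset.mem_univ t, rfl⟩))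
    · exact hm'.trans (my_pred_reach hwr m' t hwp)
  have hsum3 : ∑ t ∈ Finset.univ.filter (fun t => ∀ p, Wp p t ≤ m' p),
        vProd Wm Wp lam wit vis (g t) * lam t
      = vProd Wm Wp lam wit vis m' *
        ∑ t ∈ Finset.univ.filter (fun t => ∀ p, Wp p t ≤ m' p),
          ((vis (fun p => Wm p t) / lamBag Wm lam (fun p => Wm p t)) *
           (vis (fun p => Wp p t) / lamBag Wm lam (fun p => Wp p t))⁻¹) * lam t := by
    rw [Finset.mul_sum]
    refine Finset.sum_congr rfl fun t ht => ?_
    have hwp : ∀ p, Wp p t ≤ m' p := (Finset.mem_filter.1 ht).2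
    have := my_vProd_pred hwr h1 hlam hwit hvis m' t hwp
    simp only [hgdef]
    rw [this]
    ring
  have hsum4 : ∑ t ∈ Finset.univ.filter (fun t => ∀ p, Wp p t ≤ m' p),
        ((vis (fun p => Wm p t) / lamBag Wm lam (fun p => Wm p t)) *
         (vis (fun p => Wp p t) / lamBag Wm lam (fun p => Wp p t))⁻¹) * lam t
      = ∑ t ∈ Finset.univ.filter (fun t => Enabled Wm m' t), lam t := by
    have hkey : ∀ b' ∈ Bags Wm Wp,
        ∑ t ∈ Finset.univ.filter (fun t => (fun p => Wp p t) = b'),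
          (vis (fun p => Wm p t) / lamBag Wm lam (fun p => Wm p t)) * lam t
        = vis b' := by
      intro b' hb'
      rw [← hbal b' hb']
      have efib := Finset.sum_fiberwise_of_maps_to
        (g := fun t => fun p => Wm p t) (t := Bags Wm Wp)
        (s := Finset.univ.filter (fun t => (fun p => Wp p t) = b'))
        (fun t _ => (my_mem_Bags_iff Wm Wp _).2 ⟨t, Or.inl rfl⟩)
        (fun t => (vis (fun p => Wm p t) / lamBag Wm lam (fun p => Wm p t)) * lam t)
      rw [← efib]
      refine Finset.sum_congr rfl fun b hb => ?_
      have hfil2 : (Finset.univ.filter (fun t => (fun p => Wp p t) = b')).filter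
            (fun t => (fun p => Wm p t) = b)
          = Finset.univ.filter
            (fun t => (fun p => Wm p t) = b ∧ (fun p => Wp p t) = b') := by
        ext t
        simp only [Finset.mem_filter, Finset.mem_univ, true_and]
        tauto
      rw [hfil2]
      have hlb : lamBag Wm lam b ≠ 0 :=
        ne_of_gt (my_lamBag_pos hwr hlam ((my_mem_Bags_iff Wm Wp b).1 hb))
      rw [Pmat, Finset.sum_congr rfl (fun t ht => by
        rw [(Finset.mem_filter.1 ht).2.1])]
      rw [← Finset.mul_sum, div_mul_eq_mul_div, mul_div_assoc]
    -- fiber both sides over bags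
    have e1 := Finset.sum_fiberwise_of_maps_to
      (g := fun t => fun p => Wp p t)
      (t := (Bags Wm Wp).filter (fun b => ∀ p, b p ≤ m' p))
      (s := Finset.univ.filter (fun t => ∀ p, Wp p t ≤ m' p))
      (fun t ht => Finset.mem_filter.2
        ⟨(my_mem_Bags_iff Wm Wp _).2 ⟨t, Or.inr rfl⟩, (Finset.mem_filter.1 ht).2⟩)
      (fun t => ((vis (fun p => Wm p t) / lamBag Wm lam (fun p => Wm p t)) *
           (vis (fun p => Wp p t) / lamBag Wm lam (fun p => Wp p t))⁻¹) * lam t)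
    have e2 := Finset.sum_fiberwise_of_maps_to
      (g := fun t => fun p => Wm p t)
      (t := (Bags Wm Wp).filter (fun b => ∀ p, b p ≤ m' p))
      (s := Finset.univ.filter (fun t => Enabled Wm m' t))
      (fun t ht => Finset.mem_filter.2
        ⟨(my_mem_Bags_iff Wm Wp _).2 ⟨t, Or.inl rfl⟩,
          fun p => (Finset.mem_filter.1 ht).2 p⟩)
      lam
    rw [← e1, ← e2]
    refine Finset.sum_congr rfl fun b' hb' => ?_
    obtain ⟨hb'bags, hb'le⟩ := Finset.mem_filter.1 hb'
    have hfilL : (Finset.univ.filter (fun t => ∀ p, Wp p t ≤ m' p)).filter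
          (fun t => (fun p => Wp p t) = b')
        = Finset.univ.filter (fun t => (fun p => Wp p t) = b') := by
      ext t
      simp only [Finset.mem_filter, Finset.mem_univ, true_and]
      constructor
      · tauto
      · intro h; exact ⟨fun p => by rw [congrFun h p]; exact hb'le p, h⟩
    have hfilR : (Finset.univ.filter (fun t => Enabled Wm m' t)).filter
          (fun t => (fun p => Wm p t) = b')
        = Finset.univ.filter (fun t => (fun p => Wm p t) = b') := by
      ext t
      simp only [Finset.mem_filter, Finset.mem_univ, true_and]
      constructor
      · tauto
      · intro h; exact ⟨fun p => by rw [congrFun h p]; exact hb'le p, h⟩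
    rw [hfilL, hfilR]
    have hvne : vis b' ≠ 0 := ne_of_gt (hvis b' hb'bags)
    have hlne : lamBag Wm lam b' ≠ 0 :=
      ne_of_gt (my_lamBag_pos hwr hlam ((my_mem_Bags_iff Wm Wp b').1 hb'bags))
    have hrw : ∑ t ∈ Finset.univ.filter (fun t => (fun p => Wp p t) = b'),
          ((vis (fun p => Wm p t) / lamBag Wm lam (fun p => Wm p t)) *
           (vis (fun p => Wp p t) / lamBag Wm lam (fun p => Wp p t))⁻¹) * lam t
        = ∑ t ∈ Finset.univ.filter (fun t => (fun p => Wp p t) = b'),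
          ((vis (fun p => Wm p t) / lamBag Wm lam (fun p => Wm p t)) *
           (vis b' / lamBag Wm lam b')⁻¹) * lam t :=
      Finset.sum_congr rfl fun t ht => by rw [(Finset.mem_filter.1 ht).2]
    rw [hrw]
    have : ∑ t ∈ Finset.univ.filter (fun t => (fun p => Wp p t) = b'),
          ((vis (fun p => Wm p t) / lamBag Wm lam (fun p => Wm p t)) *
           (vis b' / lamBag Wm lam b')⁻¹) * lam t
        = (vis b' / lamBag Wm lam b')⁻¹ *
          ∑ t ∈ Finset.univ.filter (fun t => (fun p => Wp p t) = b'),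
            (vis (fun p => Wm p t) / lamBag Wm lam (fun p => Wm p t)) * lam t := by
      rw [Finset.mul_sum]
      exact Finset.sum_congr rfl fun t _ => by ring
    rw [this, hkey b' hb'bags, inv_div, div_mul_cancel₀ _ hvne]
    rfl
  rw [hsum2, hsum3, hsum4]
  simp only [hf]
  rw [hQdiag]
  ring
end
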